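/- arXiv:2106.01529 — 3 statements merged into one kernel-verified Lean document; each statement's English description precedes it below -/
import Mathlib

section
/- Let L be a symmetric positive semidefinite n×n matrix with eigenvalues 0 = λ₁ ≤ ... ≤ λₙ, let ρ > 0, and let Ŝ = (I + ρL)⁻¹. Then for every f₀ ∈ ℝⁿ, ‖(Ŝ - I)f₀‖₂² ≤ ρ · f₀ᵀ L f₀. -/
open Matrix

lemma psd_smul {n : ℕ} {M : Matrix (Fin n) (Fin n) ℝ} (hM : M.PosSemidef) {c : ℝ}
    (hc : 0 ≤ c) : (c • M).PosSemidef := by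
  refine PosSemidef.of_dotProduct_mulVec_nonneg ?_ (fun x => ?_)
  · unfold Matrix.IsHermitian
    rw [conjTranspose_smul, hM.1]
    simp
  · rw [smul_mulVec, dotProduct_smul, smul_eq_mul]
    exact mul_nonneg hc (hM.dotProduct_mulVec_nonneg x)

/-- Bias bound for the Laplacian smoothing hat matrix: if `L` is symmetric positive
semidefinite (in particular its eigenvalues satisfy `0 = λ₁ ≤ ⋯ ≤ λₙ`), `ρ > 0`, and
`Ŝ = (I + ρL)⁻¹`, then `‖(Ŝ - I)f₀‖₂² ≤ ρ · f₀ᵀ L f₀` for every `f₀ ∈ ℝⁿ`. -/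
theorem stmt_5 (n : ℕ) (L : Matrix (Fin n) (Fin n) ℝ) (hL : L.PosSemidef)
    (ρ : ℝ) (hρ : 0 < ρ) (f₀ : Fin n → ℝ) :
    ∑ i, (((1 + ρ • L)⁻¹ - 1).mulVec f₀ i) ^ 2 ≤ ρ * (f₀ ⬝ᵥ L.mulVec f₀) := by
  set A : Matrix (Fin n) (Fin n) ℝ := 1 + ρ • L with hA
  have hApd : A.PosDef := Matrix.PosDef.add_posSemidef Matrix.PosDef.one (psd_smul hL hρ.le)
  have hdet : IsUnit A.det := isUnit_iff_ne_zero.mpr (ne_of_gt hApd.det_pos)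
  have hAiA : A⁻¹ * A = 1 := nonsing_inv_mul A hdet
  have hAAi : A * A⁻¹ = 1 := mul_nonsing_inv A hdet
  -- L commutes with A
  have hLA : L * A = A * L := by
    rw [hA]; noncomm_ring
  have hLAi : L * A⁻¹ = A⁻¹ * L := by
    calc L * A⁻¹ = A⁻¹ * A * (L * A⁻¹) := by rw [hAiA, Matrix.one_mul]
    _ = A⁻¹ * (L * A) * A⁻¹ := by rw [hLA]; simp only [Matrix.mul_assoc]
    _ = A⁻¹ * L * (A * A⁻¹) := by simp only [Matrix.mul_assoc]
    _ = A⁻¹ * L := by rw [hAAi, Matrix.mul_one]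
  set B : Matrix (Fin n) (Fin n) ℝ := A⁻¹ - 1 with hB
  have hAB : A * B = -(ρ • L) := by
    rw [hB, Matrix.mul_sub, hAAi, Matrix.mul_one, hA]; abel
  have hBA : B * A = -(ρ • L) := by
    rw [hB, Matrix.sub_mul, hAiA, Matrix.one_mul, hA]; abel
  -- symmetry
  have hLsymm : Lᵀ = L := hL.1
  have hAsymm : Aᵀ = A := by
    rw [hA, transpose_add, transpose_one, transpose_smul, hLsymm]
  have hAisymm : (A⁻¹)ᵀ = A⁻¹ := by rw [transpose_nonsing_inv, hAsymm]
  have hBsymm : Bᵀ = B := by rw [hB, transpose_sub, transpose_one, hAisymm]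
  -- the middle matrix M
  set M : Matrix (Fin n) (Fin n) ℝ :=
    ρ • L + (ρ ^ 2) • (L * L) + (ρ ^ 3) • (L * (L * Lᵀ)) with hM
  have hMpsd : M.PosSemidef := by
    refine ((psd_smul hL hρ.le).add (psd_smul ?_ (by positivity))).add
      (psd_smul ?_ (by positivity))
    · have := Matrix.posSemidef_conjTranspose_mul_self L
      simpa [hLsymm] using this
    · have := hL.mul_mul_conjTranspose_same L
      simpa [Matrix.mul_assoc] using this
  -- key identity: A * (ρ•L - B*B) * A = M
  have hkey : A * (ρ • L - B * B) * A = M := by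
    have h1 : A * (B * B) * A = (A * B) * (B * A) := by
      simp [Matrix.mul_assoc]
    rw [Matrix.mul_sub, Matrix.sub_mul, h1, hAB, hBA, hM]
    have h2 : A * (ρ • L) * A = ρ • (L * (A * A)) := by
      rw [mul_smul_comm, smul_mul_assoc]
      congr 1
      rw [← hLA, Matrix.mul_assoc]
    rw [h2, hA]
    rw [hLsymm]
    simp only [Matrix.mul_add, Matrix.add_mul, Matrix.mul_one, Matrix.one_mul,
      mul_smul_comm, smul_mul_assoc, smul_smul, smul_add, neg_mul_neg, Matrix.mul_assoc]
    module
  have hD : (ρ • L - B * B) = A⁻¹ * M * A⁻¹ := by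
    symm
    calc A⁻¹ * M * A⁻¹ = A⁻¹ * (A * (ρ • L - B * B) * A) * A⁻¹ := by rw [hkey]
    _ = A⁻¹ * A * ((ρ • L - B * B) * (A * A⁻¹)) := by simp only [Matrix.mul_assoc]
    _ = ρ • L - B * B := by rw [hAiA, hAAi, Matrix.one_mul, Matrix.mul_one]
  have hDpsd : (ρ • L - B * B).PosSemidef := by
    rw [hD]
    have := hMpsd.mul_mul_conjTranspose_same A⁻¹
    rw [conjTranspose_eq_transpose_of_trivial, hAisymm] at this; exact this
  have hq := hDpsd.dotProduct_mulVec_nonneg f₀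
  simp only [star_trivial] at hq
  rw [Matrix.sub_mulVec, dotProduct_sub, smul_mulVec, dotProduct_smul, smul_eq_mul,
    sub_nonneg] at hq
  have hsum : ∑ i, ((B.mulVec f₀) i) ^ 2 = f₀ ⬝ᵥ (B * B).mulVec f₀ := by
    rw [← Matrix.mulVec_mulVec]
    rw [Matrix.dotProduct_mulVec f₀ B]
    rw [show B.vecMul f₀ = B.mulVec f₀ from by rw [← hBsymm, Matrix.mulVec_transpose, hBsymm]]
    simp [dotProduct, sq]
  calc ∑ i, ((B.mulVec f₀) i) ^ 2 = f₀ ⬝ᵥ (B * B).mulVec f₀ := hsum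
    _ ≤ ρ * (f₀ ⬝ᵥ L.mulVec f₀) := hq
end

section
/- Let t > 0 satisfy 1 ≤ t^{-d/2} ≤ n for a positive integer d and n ≥ 2. Then (1/8)t^{-d/2} - 1 ≤ Σ_{k=2}^{n} (1/(t k^{2/d} + 1))² , and if d < 4 the sum is at most 4 t^{-d/2}. -/
set_option maxHeartbeats 1000000

open MeasureTheory Finset

/-- Estimation variance-term estimate: for `t > 0` with `1 ≤ t^{-d/2} ≤ n`,
`(1/8)·t^{-d/2} - 1 ≤ ∑_{k=2}^n (1/(t·k^{2/d}+1))²`, and if `d < 4` the sum is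
at most `4·t^{-d/2}`. -/
theorem stmt_13 (d n : ℕ) (hd : 0 < d) (hn : 2 ≤ n) (t : ℝ) (ht : 0 < t)
    (h1 : 1 ≤ t ^ (-(d : ℝ) / 2)) (h2 : t ^ (-(d : ℝ) / 2) ≤ (n : ℝ)) :
    (1 / 8) * t ^ (-(d : ℝ) / 2) - 1 ≤
      ∑ k ∈ Finset.Icc 2 n, (1 / (t * (k : ℝ) ^ ((2 : ℝ) / d) + 1)) ^ 2 ∧
    (d < 4 →
      ∑ k ∈ Finset.Icc 2 n, (1 / (t * (k : ℝ) ^ ((2 : ℝ) / d) + 1)) ^ 2 ≤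
        4 * t ^ (-(d : ℝ) / 2)) := by
  have hdR : (0:ℝ) < d := by exact_mod_cast hd
  set x : ℝ := t ^ (-(d : ℝ) / 2) with hxdef
  have hx0 : 0 < x := Real.rpow_pos_of_pos ht _
  have hx2d : x ^ ((2:ℝ)/d) = t⁻¹ := by
    rw [hxdef, ← Real.rpow_mul ht.le,
      show (-(d:ℝ)/2 * (2/d)) = -1 by field_simp, Real.rpow_neg_one]
  set f : ℝ → ℝ := fun s => (1 / (t * s ^ ((2:ℝ)/d) + 1)) ^ 2 with hfdef
  have hfnonneg : ∀ s : ℝ, 0 ≤ f s := fun s => sq_nonneg _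
  constructor
  · -- lower bound
    rcases lt_or_ge x 2 with hx2 | hx2
    · have hsum : 0 ≤ ∑ k ∈ Finset.Icc 2 n, (1 / (t * (k:ℝ) ^ ((2:ℝ)/d) + 1)) ^ 2 :=
        Finset.sum_nonneg fun k _ => sq_nonneg _
      linarith
    · set m : ℕ := ⌊x⌋₊ with hmdef
      have hm2 : 2 ≤ m := Nat.le_floor (by exact_mod_cast hx2)
      have hmn : m ≤ n := by
        have := Nat.floor_le_floor h2
        simpa using this
      have hmx : (m:ℝ) ≤ x := Nat.floor_le hx0.le
      have hxm : x < m + 1 := Nat.lt_floor_add_one x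
      have key : ∀ k ∈ Finset.Icc 2 m, (1/4:ℝ) ≤ (1 / (t * (k:ℝ) ^ ((2:ℝ)/d) + 1)) ^ 2 := by
        intro k hk
        have hkm : (k:ℝ) ≤ m := by exact_mod_cast (Finset.mem_Icc.mp hk).2
        have hkx : (k:ℝ) ≤ x := hkm.trans hmx
        have hk0 : (0:ℝ) ≤ k := Nat.cast_nonneg k
        have hkr : (k:ℝ) ^ ((2:ℝ)/d) ≤ t⁻¹ := by
          rw [← hx2d]; exact Real.rpow_le_rpow hk0 hkx (by positivity)
        have htk : t * (k:ℝ) ^ ((2:ℝ)/d) ≤ 1 := by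
          calc t * (k:ℝ) ^ ((2:ℝ)/d) ≤ t * t⁻¹ := by
                exact mul_le_mul_of_nonneg_left hkr ht.le
            _ = 1 := mul_inv_cancel₀ ht.ne'
        have hden : 0 < t * (k:ℝ) ^ ((2:ℝ)/d) + 1 := by positivity
        have hhalf : (1/2:ℝ) ≤ 1 / (t * (k:ℝ) ^ ((2:ℝ)/d) + 1) :=
          one_div_le_one_div_of_le hden (by linarith)
        calc (1/4:ℝ) = (1/2)^2 := by norm_num
          _ ≤ _ := pow_le_pow_left₀ (by norm_num) hhalf 2
      have hsub : ∑ k ∈ Finset.Icc 2 m, (1 / (t * (k:ℝ) ^ ((2:ℝ)/d) + 1)) ^ 2 ≤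
          ∑ k ∈ Finset.Icc 2 n, (1 / (t * (k:ℝ) ^ ((2:ℝ)/d) + 1)) ^ 2 :=
        Finset.sum_le_sum_of_subset_of_nonneg (Finset.Icc_subset_Icc_right hmn)
          (fun k _ _ => sq_nonneg _)
      have hlow : ((m:ℝ) - 1) * (1/4) ≤
          ∑ k ∈ Finset.Icc 2 m, (1 / (t * (k:ℝ) ^ ((2:ℝ)/d) + 1)) ^ 2 := by
        have := Finset.sum_le_sum key
        rw [Finset.sum_const, Nat.card_Icc] at this
        have hcast : ((m + 1 - 2 : ℕ) : ℝ) = (m:ℝ) - 1 := by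
          have : m + 1 - 2 = m - 1 := by omega
          rw [this, Nat.cast_sub (by omega)]; norm_num
        rw [nsmul_eq_mul, hcast] at this
        exact this
      linarith
  · -- upper bound
    intro hd4
    set p : ℝ := (4:ℝ)/d with hpdef
    have hdle3 : (d:ℝ) ≤ 3 := by exact_mod_cast Nat.lt_succ_iff.mp hd4
    have hp1 : 1 < p := by
      rw [hpdef, lt_div_iff₀ hdR]; linarith
    have hp43 : (4:ℝ)/3 ≤ p := by
      rw [hpdef, div_le_div_iff₀ (by norm_num) hdR]; linarith
    have hp3 : (1:ℝ) ≤ 3*(p-1) := by nlinarith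
    have hx1 : (1:ℝ) ≤ x := h1
    have hxn : x ≤ (n:ℝ) := h2
    have hxp : x ^ p = t⁻¹ ^ 2 := by
      rw [hxdef, ← Real.rpow_mul ht.le,
        show (-(d:ℝ)/2 * p) = -2 by rw [hpdef]; field_simp; ring]
      rw [show (-2 : ℝ) = -(2:ℕ) by norm_num, Real.rpow_neg ht.le, Real.rpow_natCast, inv_pow]
    -- antitonicity of f on [1, n]
    have hanti : AntitoneOn f (Set.Icc (1:ℝ) n) := by
      intro s hs u hu hsu
      have hs1 : (1:ℝ) ≤ s := hs.1
      have hden : t * s ^ ((2:ℝ)/d) + 1 ≤ t * u ^ ((2:ℝ)/d) + 1 := by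
        have : s ^ ((2:ℝ)/d) ≤ u ^ ((2:ℝ)/d) :=
          Real.rpow_le_rpow (by linarith) hsu (by positivity)
        nlinarith
      have hdpos : 0 < t * s ^ ((2:ℝ)/d) + 1 := by
        have : (0:ℝ) ≤ s ^ ((2:ℝ)/d) := Real.rpow_nonneg (by linarith) _
        nlinarith
      have h1d : 1 / (t * u ^ ((2:ℝ)/d) + 1) ≤ 1 / (t * s ^ ((2:ℝ)/d) + 1) :=
        one_div_le_one_div_of_le hdpos hden
      have hu0 : (0:ℝ) ≤ u ^ ((2:ℝ)/d) := Real.rpow_nonneg (by linarith [hu.1]) _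
      exact pow_le_pow_left₀ (div_nonneg one_pos.le (by nlinarith)) h1d 2
    -- sum ≤ integral over [1, n]
    have hsum_int : ∑ k ∈ Finset.Icc 2 n, f (k:ℝ) ≤ ∫ s in (1:ℝ)..(n:ℝ), f s := by
      have h := AntitoneOn.sum_le_integral_Ico (a := 1) (b := n) (by omega)
        (by simpa using hanti)
      calc ∑ k ∈ Finset.Icc 2 n, f (k:ℝ)
          = ∑ i ∈ Finset.Ico 1 n, f ((i + 1 : ℕ) : ℝ) := by
            rw [Finset.sum_Ico_add' (fun j : ℕ => f (j:ℝ)) 1 n 1, Finset.Ico_add_one_right_eq_Icc]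
        _ ≤ ∫ s in ((1:ℕ):ℝ)..((n:ℕ):ℝ), f s := h
        _ = ∫ s in (1:ℝ)..(n:ℝ), f s := by norm_num
    -- integrability
    have hint1 : IntervalIntegrable f volume 1 x := by
      apply AntitoneOn.intervalIntegrable
      apply hanti.mono
      rw [Set.uIcc_of_le hx1]
      exact Set.Icc_subset_Icc le_rfl hxn
    have hint2 : IntervalIntegrable f volume x n := by
      apply AntitoneOn.intervalIntegrable
      apply hanti.mono
      rw [Set.uIcc_of_le hxn]
      exact Set.Icc_subset_Icc hx1 le_rfl
    have hsplit : ∫ s in (1:ℝ)..(n:ℝ), f s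
        = (∫ s in (1:ℝ)..x, f s) + ∫ s in x..(n:ℝ), f s :=
      (intervalIntegral.integral_add_adjacent_intervals hint1 hint2).symm
    -- first piece ≤ x - 1
    have hI1 : ∫ s in (1:ℝ)..x, f s ≤ x - 1 := by
      have hb : ∀ s ∈ Set.Icc (1:ℝ) x, f s ≤ 1 := by
        intro s hs
        have h0 : (0:ℝ) ≤ s ^ ((2:ℝ)/d) := Real.rpow_nonneg (by linarith [hs.1]) _
        have hden : 1 ≤ t * s ^ ((2:ℝ)/d) + 1 := by nlinarith
        have : 1 / (t * s ^ ((2:ℝ)/d) + 1) ≤ 1 := by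
          rw [div_le_one (by linarith)]; exact hden
        calc f s ≤ 1^2 := pow_le_pow_left₀ (by positivity) this 2
          _ = 1 := one_pow 2
      have := intervalIntegral.integral_mono_on hx1 hint1
        (intervalIntegrable_const (c := (1:ℝ))) hb
      simpa using this
    -- second piece
    have h0uIcc : (0:ℝ) ∉ Set.uIcc x (n:ℝ) := by
      rw [Set.uIcc_of_le hxn]
      intro h
      exact absurd h.1 (by linarith)
    have hgint : IntervalIntegrable (fun s : ℝ => t⁻¹^2 * s ^ (-p)) volume x n :=
      (intervalIntegral.intervalIntegrable_rpow (Or.inr h0uIcc)).const_mul _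
    have hI2a : ∫ s in x..(n:ℝ), f s ≤ ∫ s in x..(n:ℝ), t⁻¹^2 * s ^ (-p) := by
      apply intervalIntegral.integral_mono_on hxn hint2 hgint
      intro s hs
      have hs0 : 0 < s := lt_of_lt_of_le (by linarith) hs.1
      have hrp : 0 < s ^ ((2:ℝ)/d) := Real.rpow_pos_of_pos hs0 _
      have h1d : 1 / (t * s ^ ((2:ℝ)/d) + 1) ≤ 1 / (t * s ^ ((2:ℝ)/d)) :=
        one_div_le_one_div_of_le (by positivity) (by linarith)
      have hfs : f s ≤ (1 / (t * s ^ ((2:ℝ)/d)))^2 := pow_le_pow_left₀ (by positivity) h1d 2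
      have hsp : s ^ (-p) = ((s ^ ((2:ℝ)/d))⁻¹)^2 := by
        rw [← Real.rpow_neg hs0.le, ← Real.rpow_natCast (s ^ (-((2:ℝ)/d))) 2,
          ← Real.rpow_mul hs0.le]
        congr 1
        rw [hpdef]; push_cast; ring
      have heq : (1 / (t * s ^ ((2:ℝ)/d)))^2 = t⁻¹^2 * s ^ (-p) := by
        rw [hsp, one_div, mul_inv, mul_pow]
      rw [← heq]; exact hfs
    have hI2b : ∫ s in x..(n:ℝ), t⁻¹^2 * s ^ (-p) ≤ 3 * x := by
      rw [intervalIntegral.integral_const_mul, integral_rpow (Or.inr ⟨by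
        intro h
        rw [neg_eq_iff_eq_neg] at h
        have : p = 1 := by linarith [h]
        linarith, h0uIcc⟩)]
      have hnp : (0:ℝ) < (n:ℝ) ^ (-p + 1) := Real.rpow_pos_of_pos (by linarith) _
      have hxp1 : (0:ℝ) < x ^ (-p + 1) := Real.rpow_pos_of_pos hx0 _
      have hkey : t⁻¹^2 * x ^ (-p+1) = x := by
        rw [← hxp, ← Real.rpow_add hx0]
        rw [show p + (-p + 1) = 1 by ring, Real.rpow_one]
      have e1 : (((n:ℝ) ^ (-p+1) - x ^ (-p+1)) / (-p+1))
          = (x ^ (-p+1) - (n:ℝ) ^ (-p+1)) / (p-1) := by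
        rw [div_eq_div_iff (by linarith) (by linarith)]; ring
      rw [e1]
      have h3 : (x ^ (-p+1) - (n:ℝ) ^ (-p+1)) / (p-1) ≤ x ^ (-p+1) / (p-1) := by
        gcongr <;> linarith
      calc t⁻¹^2 * ((x ^ (-p+1) - (n:ℝ) ^ (-p+1)) / (p-1))
          ≤ t⁻¹^2 * (x ^ (-p+1) / (p-1)) := mul_le_mul_of_nonneg_left h3 (by positivity)
        _ = x / (p-1) := by rw [← mul_div_assoc, hkey]
        _ ≤ 3 * x := by
            rw [div_le_iff₀ (by linarith)]
            nlinarith [hx0.le]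
    calc ∑ k ∈ Finset.Icc 2 n, (1 / (t * (k:ℝ) ^ ((2:ℝ)/d) + 1)) ^ 2
        = ∑ k ∈ Finset.Icc 2 n, f (k:ℝ) := rfl
      _ ≤ ∫ s in (1:ℝ)..(n:ℝ), f s := hsum_int
      _ = (∫ s in (1:ℝ)..x, f s) + ∫ s in x..(n:ℝ), f s := hsplit
      _ ≤ (x - 1) + 3 * x := add_le_add hI1 (hI2a.trans hI2b)
      _ ≤ 4 * x := by linarith
end

section
/- Let d ≤ 4 be a positive integer and t > 0 satisfy 1 ≤ t^{-d/2} ≤ n. Then (1/32)t^{-d/2} - 1 ≤ Σ_{k=2}^{n} (1/(t k^{2/d} + 1))⁴ ≤ 2 t^{-d/2}. -/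
/-- Step inequality for telescoping: `1/((c+1)√(c+1)) ≤ 2/√c - 2/√(c+1)` for `c ≥ 1`. -/
lemma step_real (c : ℝ) (hc : 1 ≤ c) :
    1 / ((c + 1) * Real.sqrt (c + 1)) ≤ 2 / Real.sqrt c - 2 / Real.sqrt (c + 1) := by
  set a := Real.sqrt c with ha'
  set b := Real.sqrt (c + 1) with hb'
  have ha : 0 < a := Real.sqrt_pos.2 (by linarith)
  have hb : 0 < b := Real.sqrt_pos.2 (by linarith)
  have ha2 : a * a = c := Real.mul_self_sqrt (by linarith)
  have hb2 : b * b = c + 1 := Real.mul_self_sqrt (by linarith)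
  have hab : a ≤ b := Real.sqrt_le_sqrt (by linarith)
  rw [← hb2, div_sub_div _ _ ha.ne' hb.ne', div_le_div_iff₀ (by positivity) (by positivity)]
  have hd : b * b - a * a = 1 := by rw [ha2, hb2]; ring
  nlinarith [mul_pos ha hb, mul_pos (mul_pos hb hb) hb,
    mul_nonneg (mul_nonneg (mul_nonneg hb.le hb.le) hb.le) (sub_nonneg.2 hab),
    mul_nonneg (mul_nonneg ha.le hb.le) (sub_nonneg.2 hab)]

lemma tail_sum_aux (m : ℕ) (hm : 1 ≤ m) :
    ∀ n, m ≤ n → ∑ k ∈ Finset.Ioc m n, 1 / ((k : ℝ) * Real.sqrt k)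
      ≤ 2 / Real.sqrt m - 2 / Real.sqrt n := by
  intro n hn
  induction n, hn using Nat.le_induction with
  | base => simp
  | succ n hmn ih =>
      rw [Finset.sum_Ioc_succ_top hmn]
      have hn1 : (1 : ℝ) ≤ (n : ℝ) := by
        have : (1 : ℕ) ≤ n := le_trans hm hmn
        exact_mod_cast this
      have := step_real n hn1
      have hcast : ((n + 1 : ℕ) : ℝ) = (n : ℝ) + 1 := by push_cast; ring
      rw [hcast]
      linarith [ih]

set_option maxHeartbeats 1000000 in
/-- Testing variance-term estimate: for `d ≤ 4` and `t > 0` with `1 ≤ t^{-d/2} ≤ n`,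
`(1/32)·t^{-d/2} - 1 ≤ ∑_{k=2}^n (1/(t·k^{2/d}+1))⁴ ≤ 2·t^{-d/2}`. -/
theorem stmt_14 (d n : ℕ) (hd : 0 < d) (hd4 : d ≤ 4) (hn : 2 ≤ n) (t : ℝ) (ht : 0 < t)
    (h1 : 1 ≤ t ^ (-(d : ℝ) / 2)) (h2 : t ^ (-(d : ℝ) / 2) ≤ (n : ℝ)) :
    (1 / 32) * t ^ (-(d : ℝ) / 2) - 1 ≤
      ∑ k ∈ Finset.Icc 2 n, (1 / (t * (k : ℝ) ^ ((2 : ℝ) / d) + 1)) ^ 4 ∧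
    ∑ k ∈ Finset.Icc 2 n, (1 / (t * (k : ℝ) ^ ((2 : ℝ) / d) + 1)) ^ 4 ≤
      2 * t ^ (-(d : ℝ) / 2) := by
  set T : ℝ := t ^ (-(d : ℝ) / 2) with hTdef
  have hT0 : 0 < T := Real.rpow_pos_of_pos ht _
  have hd0 : (0 : ℝ) < (d : ℝ) := by exact_mod_cast hd
  have hd4' : (d : ℝ) ≤ 4 := by exact_mod_cast hd4
  -- t * k^{2/d} = (k/T)^{2/d}
  have hTe : T ^ ((2 : ℝ) / d) = t⁻¹ := by
    have hmul : (-(d : ℝ) / 2) * ((2 : ℝ) / d) = -1 := by field_simp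
    rw [hTdef, ← Real.rpow_mul ht.le, hmul, Real.rpow_neg_one]
  have hx : ∀ k : ℕ, 0 < k →
      t * (k : ℝ) ^ ((2 : ℝ) / d) = ((k : ℝ) / T) ^ ((2 : ℝ) / d) := by
    intro k hk
    have hk0 : (0 : ℝ) ≤ (k : ℝ) := by positivity
    rw [Real.div_rpow hk0 hT0.le, hTe, eq_div_iff (inv_ne_zero ht.ne'),
      mul_comm t _, mul_assoc, mul_inv_cancel₀ ht.ne', mul_one]
  clear_value T
  set m : ℕ := ⌊T⌋₊ with hmdef
  have hm1 : 1 ≤ m := Nat.le_floor (by exact_mod_cast h1)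
  have hmn : m ≤ n := by
    have := Nat.floor_mono h2
    rwa [Nat.floor_natCast] at this
  have hmT : (m : ℝ) ≤ T := Nat.floor_le hT0.le
  have hTm : T < (m : ℝ) + 1 := Nat.lt_floor_add_one T
  clear_value m
  have hf0 : ∀ k : ℕ, (0 : ℝ) ≤ (1 / (t * (k : ℝ) ^ ((2 : ℝ) / d) + 1)) ^ 4 := by
    intro k; positivity
  -- splitting
  have hsplit : ∑ k ∈ Finset.Icc 2 n, (1 / (t * (k : ℝ) ^ ((2 : ℝ) / d) + 1)) ^ 4
      = (∑ k ∈ Finset.Ioc 1 m, (1 / (t * (k : ℝ) ^ ((2 : ℝ) / d) + 1)) ^ 4)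
        + ∑ k ∈ Finset.Ioc m n, (1 / (t * (k : ℝ) ^ ((2 : ℝ) / d) + 1)) ^ 4 := by
    rw [show (2 : ℕ) = 1 + 1 from rfl, Finset.Icc_add_one_left_eq_Ioc,
      Finset.sum_Ioc_consecutive _ hm1 hmn]
  -- head terms: for 1 < k ≤ m, x ≤ 1
  have hhead : ∀ k ∈ Finset.Ioc 1 m,
      (1 / 16 : ℝ) ≤ (1 / (t * (k : ℝ) ^ ((2 : ℝ) / d) + 1)) ^ 4 ∧
      (1 / (t * (k : ℝ) ^ ((2 : ℝ) / d) + 1)) ^ 4 ≤ 1 := by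
    intro k hk
    rw [Finset.mem_Ioc] at hk
    have hx0 : (0 : ℝ) ≤ t * (k : ℝ) ^ ((2 : ℝ) / d) := by positivity
    have hkT : (k : ℝ) ≤ T := by
      have : (k : ℝ) ≤ (m : ℝ) := by exact_mod_cast hk.2
      linarith
    have hx1 : t * (k : ℝ) ^ ((2 : ℝ) / d) ≤ 1 := by
      rw [hx k (by omega)]
      exact Real.rpow_le_one (by positivity) (by rw [div_le_one hT0]; exact hkT)
        (by positivity)
    set x := t * (k : ℝ) ^ ((2 : ℝ) / d)
    constructor
    · have h12 : (1 : ℝ) / 2 ≤ 1 / (x + 1) :=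
        one_div_le_one_div_of_le (by linarith) (by linarith)
      calc (1 / 16 : ℝ) = (1 / 2) ^ 4 := by norm_num
        _ ≤ (1 / (x + 1)) ^ 4 := pow_le_pow_left₀ (by norm_num) h12 4
    · exact pow_le_one₀ (by positivity) (by
        rw [div_le_one (by linarith)]; linarith)
  -- tail terms
  have htail : ∀ k ∈ Finset.Ioc m n,
      (1 / (t * (k : ℝ) ^ ((2 : ℝ) / d) + 1)) ^ 4
        ≤ T * Real.sqrt T / 4 * (1 / ((k : ℝ) * Real.sqrt k)) := by
    intro k hk
    rw [Finset.mem_Ioc] at hk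
    have hk0 : (0 : ℝ) < (k : ℝ) := by
      have : 0 < k := by omega
      exact_mod_cast this
    have hkT : T ≤ (k : ℝ) := by
      have : (m : ℝ) + 1 ≤ (k : ℝ) := by exact_mod_cast hk.1
      linarith
    have hk1T : (1 : ℝ) ≤ (k : ℝ) / T := (one_le_div hT0).2 hkT
    have hxk : t * (k : ℝ) ^ ((2 : ℝ) / d) = ((k : ℝ) / T) ^ ((2 : ℝ) / d) :=
      hx k (by omega)
    have hhalf : (1 : ℝ) / 2 ≤ (2 : ℝ) / d := by
      rw [div_le_div_iff₀ (by norm_num) hd0]; linarith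
    set x := t * (k : ℝ) ^ ((2 : ℝ) / d) with hxdef
    set sk := Real.sqrt k with hsk'
    set sT := Real.sqrt T with hsT'
    have hsk0 : 0 < sk := Real.sqrt_pos.2 hk0
    have hsT0 : 0 < sT := Real.sqrt_pos.2 hT0
    have hsk2 : sk * sk = (k : ℝ) := Real.mul_self_sqrt hk0.le
    have hsT2 : sT * sT = T := Real.mul_self_sqrt hT0.le
    have hsqdiv : Real.sqrt ((k : ℝ) / T) = sk / sT := Real.sqrt_div hk0.le T
    have hvx : sk / sT ≤ x := by
      rw [← hsqdiv, Real.sqrt_eq_rpow, hxk]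
      exact Real.rpow_le_rpow_of_exponent_le hk1T hhalf
    have hu1 : 1 ≤ sk / sT := by
      rw [← hsqdiv]
      calc (1 : ℝ) = Real.sqrt 1 := Real.sqrt_one.symm
        _ ≤ Real.sqrt ((k : ℝ) / T) := Real.sqrt_le_sqrt hk1T
    set v := sk / sT with hv'
    have hvsT : v * sT = sk := div_mul_cancel₀ _ hsT0.ne'
    clear_value x sk sT v
    have hpow : (v + 1) ^ 4 ≤ (x + 1) ^ 4 :=
      pow_le_pow_left₀ (by positivity) (by linarith) 4
    have h1 : 4 * (v * v * v) ≤ (x + 1) ^ 4 := by nlinarith [sq_nonneg v, sq_nonneg (v * v)]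
    have key : 4 * (sk * sk * sk) ≤ (x + 1) ^ 4 * (sT * sT * sT) := by
      calc 4 * (sk * sk * sk) = 4 * (v * v * v) * (sT * sT * sT) := by
            rw [← hvsT]; ring
        _ ≤ (x + 1) ^ 4 * (sT * sT * sT) :=
            mul_le_mul_of_nonneg_right h1 (by positivity)
    have hx0 : (0 : ℝ) < x + 1 := by
      have : (0 : ℝ) ≤ x := by rw [hxdef]; positivity
      linarith
    have e1 : (k : ℝ) * sk = sk * sk * sk := by rw [← hsk2]
    have e2 : T * sT = sT * sT * sT := by rw [← hsT2]
    rw [div_pow, one_pow,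
      show T * sT / 4 * (1 / ((k : ℝ) * sk)) = (T * sT) / (4 * ((k : ℝ) * sk)) by ring,
      div_le_div_iff₀ (by positivity) (by positivity), e1, e2]
    linarith [key]
  -- head sum bounds
  have hcard : ((Finset.Ioc 1 m).card : ℝ) = (m : ℝ) - 1 := by
    rw [Nat.card_Ioc, Nat.cast_sub hm1, Nat.cast_one]
  have hS1ub : ∑ k ∈ Finset.Ioc 1 m, (1 / (t * (k : ℝ) ^ ((2 : ℝ) / d) + 1)) ^ 4
      ≤ T - 1 := by
    calc ∑ k ∈ Finset.Ioc 1 m, (1 / (t * (k : ℝ) ^ ((2 : ℝ) / d) + 1)) ^ 4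
        ≤ ∑ _k ∈ Finset.Ioc 1 m, (1 : ℝ) :=
          Finset.sum_le_sum fun k hk => (hhead k hk).2
      _ = (m : ℝ) - 1 := by rw [Finset.sum_const, nsmul_eq_mul, mul_one, hcard]
      _ ≤ T - 1 := by linarith
  have hS1lb : (1 / 32) * T - 1
      ≤ ∑ k ∈ Finset.Ioc 1 m, (1 / (t * (k : ℝ) ^ ((2 : ℝ) / d) + 1)) ^ 4 := by
    calc (1 / 32) * T - 1 ≤ (1 / 16) * ((m : ℝ) - 1) := by linarith
      _ = ∑ _k ∈ Finset.Ioc 1 m, (1 / 16 : ℝ) := by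
          rw [Finset.sum_const, nsmul_eq_mul, hcard]; ring
      _ ≤ ∑ k ∈ Finset.Ioc 1 m, (1 / (t * (k : ℝ) ^ ((2 : ℝ) / d) + 1)) ^ 4 :=
          Finset.sum_le_sum fun k hk => (hhead k hk).1
  -- tail sum bound
  have hS2 : ∑ k ∈ Finset.Ioc m n, (1 / (t * (k : ℝ) ^ ((2 : ℝ) / d) + 1)) ^ 4
      ≤ T + 1 := by
    have hsm0 : 0 < Real.sqrt m := Real.sqrt_pos.2 (by exact_mod_cast hm1)
    have hsn0 : 0 < Real.sqrt n := Real.sqrt_pos.2 (by positivity)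
    calc ∑ k ∈ Finset.Ioc m n, (1 / (t * (k : ℝ) ^ ((2 : ℝ) / d) + 1)) ^ 4
        ≤ ∑ k ∈ Finset.Ioc m n, T * Real.sqrt T / 4 * (1 / ((k : ℝ) * Real.sqrt k)) :=
          Finset.sum_le_sum htail
      _ = T * Real.sqrt T / 4 * ∑ k ∈ Finset.Ioc m n, 1 / ((k : ℝ) * Real.sqrt k) := by
          rw [Finset.mul_sum]
      _ ≤ T * Real.sqrt T / 4 * (2 / Real.sqrt m) := by
          apply mul_le_mul_of_nonneg_left _ (by positivity)
          have := tail_sum_aux m hm1 n hmn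
          have h2n : 0 ≤ 2 / Real.sqrt n := by positivity
          linarith
      _ ≤ T + 1 := by
          have h2m : T ≤ 2 * (m : ℝ) := by
            rcases le_or_gt 2 T with h | h
            · linarith
            · have : (1 : ℝ) ≤ (m : ℝ) := by exact_mod_cast hm1
              linarith
          have hsm2 : Real.sqrt m * Real.sqrt m = (m : ℝ) :=
            Real.mul_self_sqrt (by positivity)
          have hsT2 : Real.sqrt T * Real.sqrt T = T := Real.mul_self_sqrt hT0.le
          have hsT0 : 0 < Real.sqrt T := Real.sqrt_pos.2 hT0
          rw [show T * Real.sqrt T / 4 * (2 / Real.sqrt m)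
              = (T * Real.sqrt T) / (2 * Real.sqrt m) by ring,
            div_le_iff₀ (by positivity)]
          refine le_of_pow_le_pow_left₀ two_ne_zero (by positivity) ?_
          have hA : (T * Real.sqrt T) ^ 2 = T ^ 2 * T := by
            rw [mul_pow, Real.sq_sqrt hT0.le]
          have hB : ((T + 1) * (2 * Real.sqrt m)) ^ 2 = (T + 1) ^ 2 * (4 * (m : ℝ)) := by
            rw [mul_pow, mul_pow, Real.sq_sqrt (by positivity : (0:ℝ) ≤ (m:ℝ))]; ring
          rw [hA, hB]
          nlinarith [mul_le_mul_of_nonneg_right h2m (sq_nonneg (T + 1)), hT0.le, sq_nonneg T]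
  constructor
  · rw [hsplit]
    have h0 : (0 : ℝ) ≤ ∑ k ∈ Finset.Ioc m n, (1 / (t * (k : ℝ) ^ ((2 : ℝ) / d) + 1)) ^ 4 :=
      Finset.sum_nonneg fun k _ => hf0 k
    linarith
  · rw [hsplit]; linarith
end
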